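/- arXiv:math/0405550 — 5 statements merged into one kernel-verified Lean document; each statement's English description precedes it below -/
import Mathlib

section
/- Let ⪯ be an admissible order on ℕⁿ. Then the down-component composition order ⪯_c on ℕ^{2n} = ℕⁿ×ℕⁿ, defined by (α,β) ≺_c (γ,δ) iff α+β^op ≺ γ+δ^op, or (α+β^op = γ+δ^op and α ≺ γ), is an admissible order on ℕ^{2n}. -/
open TensorProduct MulOpposite

set_option synthInstance.maxHeartbeats 1000000
set_option maxHeartbeats 1000000

noncomputable section

/-- An admissible order on a commutative monoid of exponents: a total order for which `0`
is smallest and which is compatible with addition. -/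
def IsAdmissible {E : Type*} [AddCommMonoid E] (le : E → E → Prop) : Prop :=
  (∀ a b, le a b ∨ le b a) ∧
  (∀ a b, le a b → le b a → a = b) ∧
  (∀ a b c, le a b → le b c → le a c) ∧
  (∀ a, le 0 a) ∧
  (∀ a b c, le a b → le (a + c) (b + c))

/-- The strict part of an order. -/
def ltOf {E : Type*} (le : E → E → Prop) (a b : E) : Prop := le a b ∧ a ≠ b

/-- `α^op`: the reversal of a multi-exponent. -/
def expRev {n : ℕ} (α : Fin n → ℕ) : Fin n → ℕ := fun i => α i.rev

/-- The order `⪯^op` on exponents: `α ⪯^op β ↔ α^op ⪯ β^op`. -/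
def opOrd {n : ℕ} (le : (Fin n → ℕ) → (Fin n → ℕ) → Prop) :
    (Fin n → ℕ) → (Fin n → ℕ) → Prop := fun a b => le (expRev a) (expRev b)

/-- The up-component composition order `⪯^c` on `ℕⁿ × ℕⁿ`. -/
def upCompOrd {n : ℕ} (le : (Fin n → ℕ) → (Fin n → ℕ) → Prop) :
    ((Fin n → ℕ) × (Fin n → ℕ)) → ((Fin n → ℕ) × (Fin n → ℕ)) → Prop := fun a b =>
  a = b ∨ ltOf le (a.1 + expRev a.2) (b.1 + expRev b.2) ∨
    (a.1 + expRev a.2 = b.1 + expRev b.2 ∧ ltOf le (expRev a.2) (expRev b.2))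

/-- The down-component composition order `⪯_c` on `ℕⁿ × ℕⁿ`. -/
def downCompOrd {n : ℕ} (le : (Fin n → ℕ) → (Fin n → ℕ) → Prop) :
    ((Fin n → ℕ) × (Fin n → ℕ)) → ((Fin n → ℕ) × (Fin n → ℕ)) → Prop := fun a b =>
  a = b ∨ ltOf le (a.1 + expRev a.2) (b.1 + expRev b.2) ∨
    (a.1 + expRev a.2 = b.1 + expRev b.2 ∧ ltOf le a.1 b.1)

/-- The elimination order `⪯*` on `ℕⁿ × ℕⁿ` built from `⪯` and `⪯^op`. -/
def elimUpOrd {n : ℕ} (le : (Fin n → ℕ) → (Fin n → ℕ) → Prop) :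
    ((Fin n → ℕ) × (Fin n → ℕ)) → ((Fin n → ℕ) × (Fin n → ℕ)) → Prop := fun a b =>
  a = b ∨ ltOf le a.1 b.1 ∨ (a.1 = b.1 ∧ ltOf (opOrd le) a.2 b.2)

/-- The elimination order `⪯_*` on `ℕⁿ × ℕⁿ` built from `⪯` and `⪯^op`. -/
def elimDownOrd {n : ℕ} (le : (Fin n → ℕ) → (Fin n → ℕ) → Prop) :
    ((Fin n → ℕ) × (Fin n → ℕ)) → ((Fin n → ℕ) × (Fin n → ℕ)) → Prop := fun a b =>
  a = b ∨ ltOf (opOrd le) a.2 b.2 ∨ (a.2 = b.2 ∧ ltOf le a.1 b.1)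

/-- The strict TOP (term over position) order on `I × Fin m` built from a strict order on `I`. -/
def topLt {I : Type*} {m : ℕ} (lt : I → I → Prop) (a b : I × Fin m) : Prop :=
  lt a.1 b.1 ∨ (a.1 = b.1 ∧ b.2 < a.2)

/-- The strict POT (position over term) order on `I × Fin m` built from a strict order on `I`. -/
def potLt {I : Type*} {m : ℕ} (lt : I → I → Prop) (a b : I × Fin m) : Prop :=
  b.2 < a.2 ∨ (a.2 = b.2 ∧ lt a.1 b.1)

/-- The standard monomial `x^α = x₁^{α₁} ⋯ xₙ^{αₙ}` (ordered product). -/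
def stdMon {n : ℕ} {A : Type*} [Monoid A] (x : Fin n → A) (α : Fin n → ℕ) : A :=
  ((List.finRange n).map fun i => x i ^ α i).prod

/-- The quantum relation `xⱼxᵢ − qᵢⱼ xᵢxⱼ − pᵢⱼ` (for `i < j`) as an element of the free
algebra; here `pᵢⱼ` is recorded by its coefficients on standard monomials. -/
def quantumRel (k : Type*) [Field k] {n : ℕ} (q : Fin n → Fin n → k)
    (p : Fin n → Fin n → ((Fin n → ℕ) →₀ k)) (i j : Fin n) : FreeAlgebra k (Fin n) :=
  FreeAlgebra.ι k j * FreeAlgebra.ι k i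
    - q i j • (FreeAlgebra.ι k i * FreeAlgebra.ι k j)
    - (p i j).sum fun γ c => c • stdMon (FreeAlgebra.ι k) γ

/-- `R` is the PBW algebra `k{x₁,…,xₙ; Q, ⪯}`, where the relation for `i < j` reads
`xⱼxᵢ = qᵢⱼ xᵢxⱼ + pᵢⱼ`: the order is admissible, the `q`'s are nonzero, the tails `p` are
bounded by `⪯`, the canonical map from the free algebra is surjective with kernel the two-sided
ideal generated by the relations, and the standard monomials form a `k`-basis. -/
def IsPBW (k : Type*) [Field k] {n : ℕ} (R : Type*) [Ring R] [Algebra k R]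
    (x : Fin n → R) (q : Fin n → Fin n → k) (p : Fin n → Fin n → ((Fin n → ℕ) →₀ k))
    (le : (Fin n → ℕ) → (Fin n → ℕ) → Prop) : Prop :=
  IsAdmissible le ∧
  (∀ i j : Fin n, i < j → q i j ≠ 0) ∧
  (∀ i j : Fin n, i < j → ∀ γ ∈ (p i j).support,
      ltOf le γ (Pi.single i 1 + Pi.single j 1)) ∧
  Function.Surjective (FreeAlgebra.lift k x) ∧
  (∀ a : FreeAlgebra k (Fin n),
      FreeAlgebra.lift k x a = 0 ↔
        a ∈ TwoSidedIdeal.span {y | ∃ i j : Fin n, i < j ∧ y = quantumRel k q p i j}) ∧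
  LinearIndependent k (stdMon x) ∧
  Submodule.span k (Set.range (stdMon x)) = ⊤

section Env

variable {k R : Type*} [Field k] [Ring R] [Algebra k R]

/-- The left `R^env = R ⊗[k] Rᵐᵒᵖ`-module structure on `R`, given by
`(r ⊗ r') • f = r * f * r'`. -/
noncomputable instance (priority := 100) envModule : Module (R ⊗[k] Rᵐᵒᵖ) R :=
  TensorProduct.Algebra.module

/-- The multiplication map `𝔪 : R^env → R`, `r ⊗ r' ↦ r r'`, as a morphism of left
`R^env`-modules. -/
noncomputable def mulE (k R : Type*) [Field k] [Ring R] [Algebra k R] :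
    (R ⊗[k] Rᵐᵒᵖ) →ₗ[R ⊗[k] Rᵐᵒᵖ] R :=
  LinearMap.toSpanSingleton _ _ (1 : R)

/-- The map `𝔪^s : (R^env)^s → R^s` applying `𝔪` coordinatewise, as a morphism of left
`R^env`-modules. -/
noncomputable def mulS (k R : Type*) [Field k] [Ring R] [Algebra k R] (s : ℕ) :
    (Fin s → R ⊗[k] Rᵐᵒᵖ) →ₗ[R ⊗[k] Rᵐᵒᵖ] (Fin s → R) :=
  LinearMap.pi fun i => (mulE k R).comp (LinearMap.proj i)

/-- `f ⊗ 1 := (f₁ ⊗ 1, …, f_s ⊗ 1)`. -/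
def tensorOne (k : Type*) [Field k] {R : Type*} [Ring R] [Algebra k R] {s : ℕ}
    (f : Fin s → R) : Fin s → R ⊗[k] Rᵐᵒᵖ := fun i => f i ⊗ₜ[k] (1 : Rᵐᵒᵖ)

/-- `1 ⊗ f := (1 ⊗ f₁, …, 1 ⊗ f_s)`. -/
def oneTensor (k : Type*) [Field k] {R : Type*} [Ring R] [Algebra k R] {s : ℕ}
    (f : Fin s → R) : Fin s → R ⊗[k] Rᵐᵒᵖ := fun i => (1 : R) ⊗ₜ[k] op (f i)

/-- The map `(h₁,…,h_m) ↦ Σᵢ hᵢ • wᵢ`, whose kernel is the (two-sided/left) syzygy module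
of the family `w`. -/
noncomputable def syzMap (A : Type*) [Ring A] {M : Type*} [AddCommGroup M] [Module A M]
    {ι : Type*} [Fintype ι] (w : ι → M) : (ι → A) →ₗ[A] M where
  toFun h := ∑ l, h l • w l
  map_add' h h' := by simp [add_smul, Finset.sum_add_distrib]
  map_smul' a h := by simp [mul_smul, Finset.smul_sum]

end Env

/-- `e` is the exponent (leading index) of the nonzero element `h` of a free module of rank `m`
over an algebra with a standard-monomial basis `b` indexed by `I`, with respect to a strict
order `lt` on `I × Fin m`: the coordinate of `h` at `e` is nonzero and every other index with
nonzero coordinate is smaller. -/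
def IsExpOf {k R0 I : Type*} [Field k] [AddCommGroup R0] [Module k R0] {m : ℕ}
    (b : Module.Basis I k R0) (lt : I × Fin m → I × Fin m → Prop)
    (h : Fin m → R0) (e : I × Fin m) : Prop :=
  b.repr (h e.2) e.1 ≠ 0 ∧ ∀ β i, b.repr (h i) β ≠ 0 → (β, i) = e ∨ lt ((β, i)) e

/-- `G` is a Gröbner basis of the `A`-submodule `N` of the free module `(Fin m → R0)`:
`G ⊆ N \ {0}`, `G` generates `N` over `A`, and the leading exponent of every nonzero element
of `N` is a translate (by some `δ`) of the leading exponent of some element of `G`, in the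
same component.  Taking `A = R^env` acting on `R0 = R^env` gives left Gröbner bases, and
taking `A = R^env` acting on `R0 = R` gives two-sided Gröbner bases. -/
def IsGB {k R0 A I : Type*} [Field k] [AddCommGroup R0] [Module k R0] [Ring A] [Add I]
    {m : ℕ} [Module A (Fin m → R0)]
    (b : Module.Basis I k R0) (lt : I × Fin m → I × Fin m → Prop)
    (N : Submodule A (Fin m → R0)) (G : Set (Fin m → R0)) : Prop :=
  G ⊆ (N : Set (Fin m → R0)) \ {0} ∧ Submodule.span A G = N ∧
  ∀ h, h ∈ N → h ≠ 0 →
    ∃ g ∈ G, ∃ γ δ i, IsExpOf b lt g (γ, i) ∧ IsExpOf b lt h (γ + δ, i)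

end

/-- If `⪯` is an admissible order on `ℕⁿ`, then the down-component composition
order `⪯_c` is an admissible order on `ℕ^{2n} = ℕⁿ × ℕⁿ`. -/
theorem downCompOrd_isAdmissible {n : ℕ} (le : (Fin n → ℕ) → (Fin n → ℕ) → Prop)
    (hle : IsAdmissible le) : IsAdmissible (downCompOrd le) := by
  obtain ⟨tot, anti, htrans, hzero, haddc⟩ := hle
  have ltadd : ∀ u v w, ltOf le u v → ltOf le (u + w) (v + w) := by
    rintro u v w ⟨h1, h2⟩
    exact ⟨haddc _ _ _ h1, fun h => h2 (add_right_cancel h)⟩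
  have lttrans : ∀ u v w, ltOf le u v → ltOf le v w → ltOf le u w := by
    rintro u v w ⟨h1, h2⟩ ⟨h3, h4⟩
    refine ⟨htrans _ _ _ h1 h3, fun h => h2 ?_⟩
    subst h; exact anti _ _ h1 h3
  have hrevinj : ∀ a b : Fin n → ℕ, expRev a = expRev b → a = b := by
    intro a b h; funext i
    have := congrFun h i.rev
    simpa [expRev] using this
  have hrevadd : ∀ a b : Fin n → ℕ, expRev (a + b) = expRev a + expRev b := fun a b => rfl
  have key : ∀ a b : (Fin n → ℕ) × (Fin n → ℕ),
      a.1 + expRev a.2 = b.1 + expRev b.2 → a.1 = b.1 → a = b := by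
    intro a b hS h1
    have h2 : expRev a.2 = expRev b.2 := by
      rw [h1] at hS; exact add_left_cancel hS
    exact Prod.ext h1 (hrevinj _ _ h2)
  refine ⟨?_, ?_, ?_, ?_, ?_⟩
  · -- totality
    intro a b
    by_cases hS : a.1 + expRev a.2 = b.1 + expRev b.2
    · by_cases h1 : a.1 = b.1
      · left; left; exact key a b hS h1
      · rcases tot a.1 b.1 with h | h
        · left; right; right; exact ⟨hS, h, h1⟩
        · right; right; right; exact ⟨hS.symm, h, Ne.symm h1⟩
    · rcases tot (a.1 + expRev a.2) (b.1 + expRev b.2) with h | h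
      · left; right; left; exact ⟨h, hS⟩
      · right; right; left; exact ⟨h, Ne.symm hS⟩
  · -- antisymmetry
    rintro a b (rfl | ⟨h1, h2⟩ | ⟨hS, h1, h2⟩) hb
    · rfl
    · rcases hb with rfl | ⟨h3, h4⟩ | ⟨hS', _⟩
      · rfl
      · exact absurd (anti _ _ h1 h3) h2
      · exact absurd hS'.symm h2
    · rcases hb with rfl | ⟨h3, h4⟩ | ⟨_, h3, h4⟩
      · rfl
      · exact absurd hS.symm h4
      · exact absurd (anti _ _ h1 h3) h2
  · -- transitivity
    rintro a b c (rfl | ⟨h1, h2⟩ | ⟨hS, h1, h2⟩) hbc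
    · exact hbc
    · rcases hbc with rfl | ⟨h3, h4⟩ | ⟨hS', h3, h4⟩
      · right; left; exact ⟨h1, h2⟩
      · right; left; exact lttrans _ _ _ ⟨h1, h2⟩ ⟨h3, h4⟩
      · right; left; rw [← hS']; exact ⟨h1, h2⟩
    · rcases hbc with rfl | ⟨h3, h4⟩ | ⟨hS', h3, h4⟩
      · right; right; exact ⟨hS, h1, h2⟩
      · right; left; rw [hS]; exact ⟨h3, h4⟩
      · right; right; exact ⟨hS.trans hS', (lttrans _ _ _ ⟨h1, h2⟩ ⟨h3, h4⟩).1,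
          (lttrans _ _ _ ⟨h1, h2⟩ ⟨h3, h4⟩).2⟩
  · -- zero is smallest
    intro a
    have h0 : (0 : (Fin n → ℕ) × (Fin n → ℕ)).1 + expRev (0 : (Fin n → ℕ) × (Fin n → ℕ)).2
        = 0 := by funext i; rfl
    by_cases h : a.1 + expRev a.2 = 0
    · left
      have h1 : a.1 = 0 := by
        funext i
        have := congrFun h i
        simpa using (Nat.add_eq_zero.mp this).1
      have h2 : expRev a.2 = expRev 0 := by
        funext i
        have := congrFun h i
        simpa [expRev] using (Nat.add_eq_zero.mp this).2
      exact (Prod.ext h1 (hrevinj _ _ h2)).symm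
    · right; left
      rw [h0]
      exact ⟨hzero _, Ne.symm h⟩
  · -- compatibility with addition
    intro a b c hab
    have hrw : ∀ u : (Fin n → ℕ) × (Fin n → ℕ),
        (u + c).1 + expRev (u + c).2 = (u.1 + expRev u.2) + (c.1 + expRev c.2) := by
      intro u
      show (u.1 + c.1) + expRev (u.2 + c.2) = _
      rw [hrevadd]
      exact add_add_add_comm _ _ _ _
    rcases hab with rfl | h | ⟨hS, h⟩
    · left; rfl
    · right; left
      rw [hrw, hrw]
      exact ltadd _ _ _ h
    · right; right
      refine ⟨by rw [hrw, hrw, hS], ?_⟩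
      show ltOf le (a.1 + c.1) (b.1 + c.1)
      exact ltadd _ _ _ h
end

section
/- Let k be a field, R a unital associative k-algebra generated as a k-algebra by elements x₁,…,xₙ (for example, a PBW algebra), s ≥ 1, and f₁,…,f_t ∈ R^s. Let M be the R-sub-bimodule of R^s generated by f₁,…,f_t. Then (𝔪^s)^{−1}(M) is the left R^env-submodule of (R^env)^s generated by the finite set {fᵢ⊗1 : 1 ≤ i ≤ t} ∪ {xⱼe_k⊗1 − 1⊗xⱼe_k : 1 ≤ j ≤ n, 1 ≤ k ≤ s}, where e_k is the k-th standard basis vector of R^s and xⱼe_k ∈ R^s is the tuple with xⱼ in position k and 0 elsewhere. -/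
open TensorProduct MulOpposite

set_option synthInstance.maxHeartbeats 1000000
set_option maxHeartbeats 1000000

section Aux

variable {k R : Type*} [Field k] [Ring R] [Algebra k R]

lemma mulE_tmul (a : R) (b : Rᵐᵒᵖ) : mulE k R (a ⊗ₜ[k] b) = a * b.unop := by
  show (a ⊗ₜ[k] b) • (1 : R) = a * b.unop
  rw [TensorProduct.Algebra.smul_def, MulOpposite.smul_eq_mul_unop, one_mul, smul_eq_mul]

lemma mulS_tensorOne {s : ℕ} (g : Fin s → R) : mulS k R s (tensorOne k g) = g := by
  funext i
  simp [mulS, tensorOne, mulE_tmul]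

lemma mulS_oneTensor {s : ℕ} (g : Fin s → R) : mulS k R s (oneTensor k g) = g := by
  funext i
  simp [mulS, oneTensor, mulE_tmul]

/-- `d r = r ⊗ 1 - 1 ⊗ rᵒᵖ`. -/
noncomputable def dEnv (k : Type*) [Field k] {R : Type*} [Ring R] [Algebra k R] (r : R) : R ⊗[k] Rᵐᵒᵖ :=
  r ⊗ₜ[k] (1 : Rᵐᵒᵖ) - (1 : R) ⊗ₜ[k] op r

lemma dEnv_mul (r r' : R) :
    dEnv k (r * r') = (r ⊗ₜ[k] (1 : Rᵐᵒᵖ)) * dEnv k r' + ((1 : R) ⊗ₜ[k] op r') * dEnv k r := by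
  simp only [dEnv, mul_sub, Algebra.TensorProduct.tmul_mul_tmul, one_mul, mul_one]
  rw [show op r' * op r = op (r * r') from rfl]
  abel

lemma dEnv_mem {n : ℕ} (x : Fin n → R) (hgen : Algebra.adjoin k (Set.range x) = ⊤) (r : R) :
    dEnv k r ∈ Submodule.span (R ⊗[k] Rᵐᵒᵖ) (Set.range fun j => dEnv k (x j)) := by
  set J := Submodule.span (R ⊗[k] Rᵐᵒᵖ) (Set.range fun j => dEnv k (x j)) with hJ
  let S : Subalgebra k R :=
    { carrier := {r | dEnv k r ∈ J}
      mul_mem' := by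
        intro a b ha hb
        simp only [Set.mem_setOf_eq] at *
        rw [dEnv_mul]
        exact J.add_mem (J.smul_mem _ hb) (J.smul_mem _ ha)
      add_mem' := by
        intro a b ha hb
        simp only [Set.mem_setOf_eq] at *
        have : dEnv k (a + b) = dEnv k a + dEnv k b := by
          simp only [dEnv, TensorProduct.add_tmul, op_add, TensorProduct.tmul_add]
          abel
        rw [this]; exact J.add_mem ha hb
      one_mem' := by
        have : dEnv k (1 : R) = 0 := by simp [dEnv]
        simp only [Set.mem_setOf_eq, this]
        exact J.zero_mem
      zero_mem' := by
        have : dEnv k (0 : R) = 0 := by simp [dEnv]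
        simp only [Set.mem_setOf_eq, this]
        exact J.zero_mem
      algebraMap_mem' := by
        intro c
        have : dEnv k (algebraMap k R c) = 0 := by
          have h1 : (algebraMap k R c) ⊗ₜ[k] (1 : Rᵐᵒᵖ) = c • ((1:R) ⊗ₜ[k] (1:Rᵐᵒᵖ)) := by
            rw [Algebra.algebraMap_eq_smul_one, TensorProduct.smul_tmul']
          have h2 : (1:R) ⊗ₜ[k] op (algebraMap k R c) = c • ((1:R) ⊗ₜ[k] (1:Rᵐᵒᵖ)) := by
            rw [Algebra.algebraMap_eq_smul_one, op_smul, TensorProduct.tmul_smul]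
            rfl
          rw [dEnv, h1, h2, sub_self]
        simp only [Set.mem_setOf_eq, this]
        exact J.zero_mem }
  have hx : ∀ j, x j ∈ S := fun j => Submodule.subset_span ⟨j, rfl⟩
  have : Algebra.adjoin k (Set.range x) ≤ S := Algebra.adjoin_le (by rintro _ ⟨j, rfl⟩; exact hx j)
  rw [hgen] at this
  exact this trivial

lemma sub_mulE_tmul_mem {n : ℕ} (x : Fin n → R) (hgen : Algebra.adjoin k (Set.range x) = ⊤)
    (g : R ⊗[k] Rᵐᵒᵖ) :
    g - (mulE k R g) ⊗ₜ[k] (1 : Rᵐᵒᵖ)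
      ∈ Submodule.span (R ⊗[k] Rᵐᵒᵖ) (Set.range fun j => dEnv k (x j)) := by
  set J := Submodule.span (R ⊗[k] Rᵐᵒᵖ) (Set.range fun j => dEnv k (x j)) with hJ
  induction g using TensorProduct.induction_on with
  | zero => simpa using J.zero_mem
  | tmul a b =>
      have key : a ⊗ₜ[k] b - (a * b.unop) ⊗ₜ[k] (1 : Rᵐᵒᵖ) = -((a ⊗ₜ[k] (1:Rᵐᵒᵖ)) * dEnv k b.unop) := by
        simp only [dEnv, mul_sub, Algebra.TensorProduct.tmul_mul_tmul, one_mul, mul_one,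
          op_unop, neg_sub]
      rw [mulE_tmul, key]
      exact J.neg_mem (J.smul_mem _ (dEnv_mem x hgen b.unop))
  | add a b ha hb =>
      have : a + b - (mulE k R (a + b)) ⊗ₜ[k] (1:Rᵐᵒᵖ)
          = (a - (mulE k R a) ⊗ₜ[k] (1:Rᵐᵒᵖ)) + (b - (mulE k R b) ⊗ₜ[k] (1:Rᵐᵒᵖ)) := by
        rw [map_add, TensorProduct.add_tmul]; abel
      rw [this]; exact J.add_mem ha hb

lemma singleDiff_eq {s : ℕ} {n : ℕ} (x : Fin n → R) (jc : Fin n × Fin s) :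
    tensorOne k (Pi.single jc.2 (x jc.1)) - oneTensor k (Pi.single jc.2 (x jc.1))
      = Pi.single jc.2 (dEnv k (x jc.1)) := by
  funext i
  by_cases h : i = jc.2
  · subst h; simp [tensorOne, oneTensor, dEnv]
  · simp [tensorOne, oneTensor, Pi.single_eq_of_ne h]

lemma ker_mulS_le {n s : ℕ} (x : Fin n → R) (hgen : Algebra.adjoin k (Set.range x) = ⊤)
    (h : Fin s → R ⊗[k] Rᵐᵒᵖ) (hker : mulS k R s h = 0) :
    h ∈ Submodule.span (R ⊗[k] Rᵐᵒᵖ)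
      (Set.range fun jc : Fin n × Fin s =>
        tensorOne k (Pi.single jc.2 (x jc.1)) - oneTensor k (Pi.single jc.2 (x jc.1))) := by
  set T := Submodule.span (R ⊗[k] Rᵐᵒᵖ)
      (Set.range fun jc : Fin n × Fin s =>
        tensorOne k (Pi.single jc.2 (x jc.1)) - oneTensor k (Pi.single jc.2 (x jc.1))) with hT
  have hsingle : ∀ (c : Fin s) (g : R ⊗[k] Rᵐᵒᵖ),
      g ∈ Submodule.span (R ⊗[k] Rᵐᵒᵖ) (Set.range fun j => dEnv k (x j)) →
      Pi.single c g ∈ T := by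
    intro c g hg
    have := Submodule.mem_map_of_mem (f := LinearMap.single (R ⊗[k] Rᵐᵒᵖ)
      (fun _ : Fin s => R ⊗[k] Rᵐᵒᵖ) c) hg
    rw [Submodule.map_span] at this
    refine Submodule.span_le.mpr ?_ this
    rintro _ ⟨_, ⟨j, rfl⟩, rfl⟩
    rw [hT]
    have : (LinearMap.single (R ⊗[k] Rᵐᵒᵖ) (fun _ : Fin s => R ⊗[k] Rᵐᵒᵖ) c) (dEnv k (x j))
        = (Pi.single c (dEnv k (x j)) : Fin s → R ⊗[k] Rᵐᵒᵖ) := rfl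
    rw [this, ← singleDiff_eq x (j, c)]
    exact Submodule.subset_span ⟨(j, c), rfl⟩
  have hdecomp : h = ∑ c : Fin s, Pi.single c (h c) := (Finset.univ_sum_single h).symm
  rw [hdecomp]
  refine Submodule.sum_mem _ fun c _ => ?_
  have hc : mulE k R (h c) = 0 := by
    have := congrFun hker c
    simpa [mulS] using this
  have : (Pi.single c (h c) : Fin s → R ⊗[k] Rᵐᵒᵖ)
      = Pi.single c (h c - (mulE k R (h c)) ⊗ₜ[k] (1:Rᵐᵒᵖ)) := by
    rw [hc, TensorProduct.zero_tmul, sub_zero]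
  rw [this]
  exact hsingle c _ (sub_mulE_tmul_mem x hgen (h c))

end Aux

/-- If `R` is generated as a `k`-algebra by `x₁,…,xₙ` and `M` is the
`R`-sub-bimodule of `R^s` generated by `f₁,…,f_t`, then `(𝔪^s)⁻¹(M)` is the left
`R^env`-submodule of `(R^env)^s` generated by the `fᵢ⊗1` together with the `sn` elements
`xⱼe_c ⊗ 1 − 1 ⊗ xⱼe_c`. -/
theorem comap_mulS_span_eq_span_finite
    {k R : Type*} [Field k] [Ring R] [Algebra k R] {n s : ℕ} (hs : 1 ≤ s)
    (x : Fin n → R) (hgen : Algebra.adjoin k (Set.range x) = ⊤)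
    {t : ℕ} (f : Fin t → Fin s → R) :
    Submodule.comap (mulS k R s)
        (Submodule.span (R ⊗[k] Rᵐᵒᵖ) (Set.range f)) =
      Submodule.span (R ⊗[k] Rᵐᵒᵖ)
        ((Set.range fun i => tensorOne k (f i)) ∪
          Set.range fun jc : Fin n × Fin s =>
            tensorOne k (Pi.single jc.2 (x jc.1)) - oneTensor k (Pi.single jc.2 (x jc.1))) := by
  apply le_antisymm
  · intro h hh
    rw [Submodule.mem_comap] at hh
    obtain ⟨a, ha⟩ := (Submodule.mem_span_range_iff_exists_fun _).mp hh
    set h' := h - ∑ i, a i • tensorOne k (f i) with hh'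
    have hker : mulS k R s h' = 0 := by
      rw [hh', map_sub, map_sum]
      simp only [map_smul, mulS_tensorOne]
      rw [ha, sub_self]
    have h'mem := ker_mulS_le x hgen h' hker
    have hsplit : h = (∑ i, a i • tensorOne k (f i)) + h' := by rw [hh']; abel
    rw [hsplit]
    refine Submodule.add_mem _ ?_ ?_
    · refine Submodule.sum_mem _ fun i _ => Submodule.smul_mem _ _ ?_
      exact Submodule.subset_span (Set.mem_union_left _ ⟨i, rfl⟩)
    · exact Submodule.span_mono Set.subset_union_right h'mem
  · rw [Submodule.span_le]
    rintro g (⟨i, rfl⟩ | ⟨jc, rfl⟩)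
    · rw [SetLike.mem_coe, Submodule.mem_comap, mulS_tensorOne]
      exact Submodule.subset_span ⟨i, rfl⟩
    · rw [SetLike.mem_coe, Submodule.mem_comap, map_sub, mulS_tensorOne, mulS_oneTensor,
        sub_self]
      exact Submodule.zero_mem _
end

section
/- Let k be a field, R a unital associative k-algebra, s, p, q ≥ 1, and M ⊆ R^s an R-sub-bimodule. Let H ∈ M_{(s+p)×q}(R) be written in blocks H = [H₁; H₂] with H₁ ∈ M_{s×q}(R) and H₂ ∈ M_{p×q}(R), and suppose: (i) for every h = (h₁,…,h_s) ∈ (R^env)^s, Σ_{l=1}^s h_l·(H₁)_l = Σ_{l=1}^s (𝔪(h_l)⊗1)·(H₁)_l in R^q, where (H₁)_l ∈ R^q is the l-th row of H₁ and · is the left R^env-action on R^q; and (ii) M = {h ∈ R^s : there exists h'' ∈ (R^env)^p with (h⊗1, h'') ∈ Syz(H)}. If h₁,…,h_t ∈ (R^env)^{s+p} generate Syz(H) as a left R^env-module, and each hᵢ is written hᵢ = (hᵢ', hᵢ'') with hᵢ' ∈ (R^env)^s and hᵢ'' ∈ (R^env)^p, then M is the left R^env-submodule (equivalently, R-sub-bimodule)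 of R^s generated by 𝔪^s(h₁'),…,𝔪^s(h_t'). -/
open TensorProduct MulOpposite

set_option synthInstance.maxHeartbeats 1000000
set_option maxHeartbeats 1000000

/-- Let `M ⊆ R^s` be an `R`-sub-bimodule and `H = [H₁; H₂]` an
`(s+p) × q` matrix over `R` (rows indexed by `Fin (s+p)`, the first `s` rows forming `H₁`)
such that: (i) `Σ_l h_l • H₁_l = Σ_l (𝔪(h_l)⊗1) • H₁_l` for all `h ∈ (R^env)^s`, and
(ii) `M = {h ∈ R^s : ∃ h'' ∈ (R^env)^p, (h⊗1, h'') ∈ Syz(H)}`.  If `h₁,…,h_t` generate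
`Syz(H)` as a left `R^env`-module, with `hᵢ'` the first `s` coordinates of `hᵢ`, then
`M` is the left `R^env`-submodule of `R^s` generated by `𝔪^s(h₁'),…,𝔪^s(h_t')`. -/
theorem bimodule_eq_span_mulS_of_syz
    {k R : Type*} [Field k] [Ring R] [Algebra k R] {s p q : ℕ}
    (hs : 1 ≤ s) (hp : 1 ≤ p) (hq : 1 ≤ q)
    (M : Submodule (R ⊗[k] Rᵐᵒᵖ) (Fin s → R))
    (H : Fin (s + p) → Fin q → R)
    (hi : ∀ h : Fin s → R ⊗[k] Rᵐᵒᵖ,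
      ∑ l, h l • H (Fin.castAdd p l) =
        ∑ l, ((mulE k R (h l) : R) ⊗ₜ[k] (1 : Rᵐᵒᵖ)) • H (Fin.castAdd p l))
    (hii : (M : Set (Fin s → R)) =
      {h : Fin s → R | ∃ h'' : Fin p → R ⊗[k] Rᵐᵒᵖ,
        Fin.append (tensorOne k h) h'' ∈ LinearMap.ker (syzMap (R ⊗[k] Rᵐᵒᵖ) H)})
    {t : ℕ} (h : Fin t → (Fin (s + p) → R ⊗[k] Rᵐᵒᵖ))
    (hgen : Submodule.span (R ⊗[k] Rᵐᵒᵖ) (Set.range h) =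
      LinearMap.ker (syzMap (R ⊗[k] Rᵐᵒᵖ) H)) :
    M = Submodule.span (R ⊗[k] Rᵐᵒᵖ)
      (Set.range fun i => mulS k R s fun l => h i (Fin.castAdd p l)) := by
  have key : ∀ g : Fin s → R, mulS k R s (tensorOne k g) = g := by
    intro g; funext i
    simp [mulS, mulE, tensorOne, TensorProduct.Algebra.smul_def]
  apply le_antisymm
  · intro f hf
    have hf' : f ∈ (M : Set (Fin s → R)) := hf
    rw [hii] at hf'
    obtain ⟨h'', hker⟩ := hf'
    rw [← hgen, Submodule.mem_span_range_iff_exists_fun] at hker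
    obtain ⟨c, hc⟩ := hker
    have h2 : tensorOne k f = ∑ i, c i • fun l => h i (Fin.castAdd p l) := by
      funext l
      have := congrFun hc (Fin.castAdd p l)
      simp only [Finset.sum_apply, Pi.smul_apply, Fin.append_left] at this ⊢
      exact this.symm
    have h3 : f = ∑ i, c i • mulS k R s (fun l => h i (Fin.castAdd p l)) := by
      rw [← key f, h2, map_sum]
      simp only [map_smul]
    rw [h3]
    exact Submodule.sum_mem _ fun i _ =>
      Submodule.smul_mem _ _ (Submodule.subset_span ⟨i, rfl⟩)
  · rw [Submodule.span_le]
    rintro _ ⟨i, rfl⟩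
    have hmem : h i ∈ LinearMap.ker (syzMap (R ⊗[k] Rᵐᵒᵖ) H) := by
      rw [← hgen]; exact Submodule.subset_span ⟨i, rfl⟩
    have hz : ∑ l, h i l • H l = 0 := hmem
    rw [Fin.sum_univ_add] at hz
    show mulS k R s (fun l => h i (Fin.castAdd p l)) ∈ (M : Set (Fin s → R))
    rw [hii]
    refine ⟨fun j => h i (Fin.natAdd s j), ?_⟩
    rw [LinearMap.mem_ker]
    show (∑ l, Fin.append (tensorOne k (mulS k R s fun l => h i (Fin.castAdd p l)))
      (fun j => h i (Fin.natAdd s j)) l • H l) = 0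
    rw [Fin.sum_univ_add]
    simp only [Fin.append_left, Fin.append_right]
    have e1 : tensorOne k (mulS k R s fun l => h i (Fin.castAdd p l))
        = fun l => (mulE k R (h i (Fin.castAdd p l))) ⊗ₜ[k] (1 : Rᵐᵒᵖ) := by
      funext l; simp [tensorOne, mulS]
    rw [e1, ← hi (fun l => h i (Fin.castAdd p l))]
    exact hz
end

section
/- Let k be a field, R a unital associative k-algebra, s ≥ 1, r ≥ 1, and for each 1 ≤ i ≤ r let Mᵢ ⊆ R^s be the R-sub-bimodule generated by elements f¹ᵢ,…,f^{tᵢ}ᵢ ∈ R^s (tᵢ ≥ 1). Set T := t₁+⋯+t_r and let Φ : (R^env)^{s+T} → (R^s)^r be the left R^env-linear map whose i-th component sends (g, g¹,…,g^r), with g ∈ (R^env)^s and g^i ∈ (R^env)^{tᵢ}, to Σ_{l=1}^s g_l·e_l + Σ_{j=1}^{tᵢ} g^i_j·f^jᵢ ∈ R^s, where e_l is the l-th standard basis vector of R^s and · is the left R^env-action on R^s (Φ is the syzygy map of the block matrix H ∈ M_{(s+T)×rs}(R) having the identity I_s in the top s rows of each of the r column blocks and the rows f^jᵢ in block i). Then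 M₁ ∩ ⋯ ∩ M_r = {h ∈ R^s : there exists h'' ∈ (R^env)^T with Φ(h⊗1, h'') = 0}. -/
open TensorProduct MulOpposite

set_option synthInstance.maxHeartbeats 1000000
set_option maxHeartbeats 1000000

/-- The syzygy map `Φ` of the block matrix `H` with the identity `I_s` in the top `s` rows of
each of the `r` column blocks and the rows `fᵢʲ` in block `i`: its `i`-th component sends
`(g, g¹,…,g^r)` to `Σ_l g_l • e_l + Σ_j gʲᵢ • fᵢʲ ∈ R^s`. -/
noncomputable def interMap (k : Type*) [Field k] {R : Type*} [Ring R] [Algebra k R]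
    {s r : ℕ} (t : Fin r → ℕ) (f : (i : Fin r) → Fin (t i) → (Fin s → R)) :
    ((Fin s ⊕ (Σ i : Fin r, Fin (t i))) → R ⊗[k] Rᵐᵒᵖ) →ₗ[R ⊗[k] Rᵐᵒᵖ]
      (Fin r → Fin s → R) :=
  LinearMap.pi fun i => syzMap (R ⊗[k] Rᵐᵒᵖ)
    (Sum.elim (fun l => Pi.single l (1 : R))
      (fun jt : Σ i : Fin r, Fin (t i) => if jt.1 = i then f jt.1 jt.2 else 0))


lemma tmul_one_smul {k R : Type*} [Field k] [Ring R] [Algebra k R] (a x : R) :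
    (a ⊗ₜ[k] (1 : Rᵐᵒᵖ)) • x = a * x := by
  rw [TensorProduct.Algebra.smul_def, one_smul, smul_eq_mul]

lemma interMap_apply {k R : Type*} [Field k] [Ring R] [Algebra k R]
    {s r : ℕ} (t : Fin r → ℕ) (f : (i : Fin r) → Fin (t i) → (Fin s → R))
    (h : Fin s → R) (h'' : (Σ i : Fin r, Fin (t i)) → R ⊗[k] Rᵐᵒᵖ) (i : Fin r) :
    interMap k t f (Sum.elim (tensorOne k h) h'') i
      = h + ∑ j : Fin (t i), h'' ⟨i, j⟩ • f i j := by
  simp only [interMap, LinearMap.pi_apply, syzMap, LinearMap.coe_mk, AddHom.coe_mk]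
  rw [Fintype.sum_sum_type]
  congr 1
  · have h1 : ∀ l : Fin s,
        (Sum.elim (tensorOne k h) h'' (Sum.inl l)) •
          (Sum.elim (fun l => Pi.single l (1 : R))
            (fun jt : Σ i' : Fin r, Fin (t i') =>
              if jt.1 = i then f jt.1 jt.2 else 0) (Sum.inl l))
          = Pi.single l (h l) := by
      intro l
      funext m
      rw [Sum.elim_inl, Sum.elim_inl]
      show ((tensorOne k h l) • (Pi.single l (1 : R) : Fin s → R)) m = _
      rw [Pi.smul_apply]
      show (h l ⊗ₜ[k] (1 : Rᵐᵒᵖ)) • (Pi.single l (1 : R) : Fin s → R) m = _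
      rw [tmul_one_smul, Pi.single_apply, Pi.single_apply]
      split <;> simp
    rw [Finset.sum_congr rfl fun l _ => h1 l, Finset.univ_sum_single]
  · rw [← Finset.univ_sigma_univ, Finset.sum_sigma]
    have h2 : ∀ a : Fin r,
        (∑ b : Fin (t a), Sum.elim (tensorOne k h) h'' (Sum.inr ⟨a, b⟩) •
          Sum.elim (fun l => Pi.single l (1 : R))
            (fun jt : Σ i' : Fin r, Fin (t i') =>
              if jt.1 = i then f jt.1 jt.2 else 0) (Sum.inr ⟨a, b⟩))
          = if a = i then ∑ b : Fin (t a), h'' ⟨a, b⟩ • f a b else 0 := by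
      intro a
      by_cases ha : a = i <;> simp [ha]
    rw [Finset.sum_congr rfl fun a _ => h2 a, Finset.sum_ite_eq' Finset.univ i]
    simp

/-- If `Mᵢ` is the `R`-sub-bimodule of `R^s` generated by
`fᵢ¹,…,fᵢ^{tᵢ}` then `M₁ ∩ ⋯ ∩ M_r = {h ∈ R^s : ∃ h'' ∈ (R^env)^T, Φ(h⊗1, h'') = 0}`. -/
theorem inter_bimodules_eq_syz {k R : Type*} [Field k] [Ring R] [Algebra k R]
    {s r : ℕ} (hs : 1 ≤ s) (hr : 1 ≤ r) (t : Fin r → ℕ) (ht : ∀ i, 1 ≤ t i)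
    (f : (i : Fin r) → Fin (t i) → (Fin s → R)) :
    ((⨅ i : Fin r, Submodule.span (R ⊗[k] Rᵐᵒᵖ) (Set.range (f i)) :
        Submodule (R ⊗[k] Rᵐᵒᵖ) (Fin s → R)) : Set (Fin s → R)) =
      {h : Fin s → R | ∃ h'' : (Σ i : Fin r, Fin (t i)) → R ⊗[k] Rᵐᵒᵖ,
        interMap k t f (Sum.elim (tensorOne k h) h'') = 0} := by
  ext h
  simp only [SetLike.mem_coe, Submodule.mem_iInf, Set.mem_setOf_eq]
  constructor
  · intro hm
    choose c hc using fun i =>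
      (Submodule.mem_span_range_iff_exists_fun _).mp (hm i)
    refine ⟨fun jt => -(c jt.1 jt.2), ?_⟩
    funext i
    rw [Pi.zero_apply, interMap_apply]
    simp only [neg_smul, Finset.sum_neg_distrib, hc i]
    exact add_neg_cancel h
  · rintro ⟨h'', hz⟩ i
    rw [Submodule.mem_span_range_iff_exists_fun]
    refine ⟨fun j => -(h'' ⟨i, j⟩), ?_⟩
    have hzi := congrFun hz i
    rw [interMap_apply, Pi.zero_apply] at hzi
    simp only [neg_smul, Finset.sum_neg_distrib]
    exact neg_eq_of_add_eq_zero_left hzi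
end

section
/- Let k be a field, R a unital associative k-algebra, s ≥ 1, r ≥ 1, and for each 1 ≤ i ≤ r let Mᵢ ⊆ R^s be the R-sub-bimodule generated by f¹ᵢ,…,f^{tᵢ}ᵢ ∈ R^s. Set T := t₁+⋯+t_r and let Φ : (R^env)^{s+T} → (R^s)^r be the left R^env-linear map whose i-th component sends (g, g¹,…,g^r) to Σ_{l=1}^s g_l·e_l + Σ_{j=1}^{tᵢ} g^i_j·f^jᵢ ∈ R^s (the syzygy map of the block matrix H with identity I_s in the top s rows of each of the r column blocks and the rows f^jᵢ in block i). If g₁,…,g_t ∈ (R^env)^{s+T} generate Ker(Φ) = Syz(H) as a left R^env-module, where g_m = (g_m', g_m'') with g_m' ∈ (R^env)^s and g_m'' ∈ (R^env)^T, then M₁ ∩ ⋯ ∩ M_r is the left R^env-submodule (equivalently, R-sub-bimodule) of R^s generated by 𝔪^s(g₁'),…,𝔪^s(g_t'). -/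
open TensorProduct MulOpposite

set_option synthInstance.maxHeartbeats 1000000
set_option maxHeartbeats 1000000

/-- If `Mᵢ` is the `R`-sub-bimodule of `R^s` generated by `fᵢ¹,…,fᵢ^{tᵢ}`
and `g₁,…,g_N` generate `Ker Φ = Syz(H)` as a left `R^env`-module, each written
`g_m = (g_m', g_m'')` with `g_m' ∈ (R^env)^s`, then `M₁ ∩ ⋯ ∩ M_r` is the left
`R^env`-submodule of `R^s` generated by `𝔪^s(g₁'),…,𝔪^s(g_N')`. -/
theorem inter_bimodules_eq_span_mulS {k R : Type*} [Field k] [Ring R] [Algebra k R]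
    {s r : ℕ} (hs : 1 ≤ s) (hr : 1 ≤ r) (t : Fin r → ℕ) (ht : ∀ i, 1 ≤ t i)
    (f : (i : Fin r) → Fin (t i) → (Fin s → R)) {N : ℕ}
    (g : Fin N → ((Fin s ⊕ (Σ i : Fin r, Fin (t i))) → R ⊗[k] Rᵐᵒᵖ))
    (hg : Submodule.span (R ⊗[k] Rᵐᵒᵖ) (Set.range g) = LinearMap.ker (interMap k t f)) :
    (⨅ i : Fin r, Submodule.span (R ⊗[k] Rᵐᵒᵖ) (Set.range (f i))) =
      Submodule.span (R ⊗[k] Rᵐᵒᵖ)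
        (Set.range fun m => mulS k R s fun l => g m (Sum.inl l)) := by
  
  classical
  -- key computation lemmas
  have mulS_apply : ∀ (h : Fin s → R ⊗[k] Rᵐᵒᵖ) (l : Fin s),
      mulS k R s h l = h l • (1 : R) := fun h l => rfl
  have mulS_eq_sum : ∀ (h : Fin s → R ⊗[k] Rᵐᵒᵖ),
      mulS k R s h = ∑ l, h l • (Pi.single l (1 : R) : Fin s → R) := by
    intro h
    funext l'
    rw [mulS_apply, Finset.sum_apply]
    simp only [Pi.smul_apply, Pi.single_apply]
    rw [Finset.sum_eq_single l']
    · simp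
    · intro b _ hb; simp [Ne.symm hb]
    · simp
  have interMap_apply : ∀ (G : (Fin s ⊕ (Σ i : Fin r, Fin (t i))) → R ⊗[k] Rᵐᵒᵖ) (i : Fin r),
      interMap k t f G i =
        (∑ l, G (Sum.inl l) • (Pi.single l (1 : R) : Fin s → R)) +
          ∑ jt : Σ i' : Fin r, Fin (t i'),
            G (Sum.inr jt) • (if jt.1 = i then f jt.1 jt.2 else 0) := by
    intro G i
    show (∑ x : Fin s ⊕ (Σ i' : Fin r, Fin (t i')), G x •
      Sum.elim (fun l => (Pi.single l (1 : R) : Fin s → R))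
        (fun jt : Σ i' : Fin r, Fin (t i') => if jt.1 = i then f jt.1 jt.2 else 0) x) = _
    rw [Fintype.sum_sum_type]
    rfl
  apply le_antisymm
  · -- ⋂ Mᵢ ⊆ span of the mulS of the g's
    intro h hh
    simp only [Submodule.mem_iInf] at hh
    have hex : ∀ i : Fin r, ∃ a : Fin (t i) → R ⊗[k] Rᵐᵒᵖ, ∑ j, a j • f i j = h := by
      intro i
      exact (Submodule.mem_span_range_iff_exists_fun _).mp (hh i)
    choose a ha using hex
    set G : (Fin s ⊕ (Σ i : Fin r, Fin (t i))) → R ⊗[k] Rᵐᵒᵖ :=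
      Sum.elim (fun l => h l ⊗ₜ[k] (1 : Rᵐᵒᵖ)) (fun jt => -(a jt.1 jt.2)) with hG
    have hGker : G ∈ LinearMap.ker (interMap k t f) := by
      rw [LinearMap.mem_ker]
      funext i
      rw [Pi.zero_apply, interMap_apply]
      have h1 : (∑ l, G (Sum.inl l) • (Pi.single l (1 : R) : Fin s → R)) = h := by
        funext l'
        rw [Finset.sum_apply]
        simp only [hG, Sum.elim_inl, Pi.smul_apply, Pi.single_apply]
        rw [Finset.sum_eq_single l']
        · simp only [if_pos rfl]
          rw [TensorProduct.Algebra.smul_def]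
          simp
        · intro b _ hb
          simp [Ne.symm hb]
        · simp
      have h2 : (∑ jt : Σ i' : Fin r, Fin (t i'),
          G (Sum.inr jt) • (if jt.1 = i then f jt.1 jt.2 else 0)) = -h := by
        have : ∀ jt : Σ i' : Fin r, Fin (t i'),
            G (Sum.inr jt) • (if jt.1 = i then f jt.1 jt.2 else 0) =
              if jt.1 = i then -(a jt.1 jt.2 • f jt.1 jt.2) else 0 := by
          intro jt
          simp only [hG, Sum.elim_inr]
          split_ifs with hji
          · rw [neg_smul]
          · simp
        rw [Finset.sum_congr rfl fun jt _ => this jt, ← ha i,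
          ← Finset.univ_sigma_univ, Finset.sum_sigma]
        rw [Finset.sum_eq_single i]
        · simp [Finset.sum_neg_distrib]
        · intro b _ hb; simp [hb]
        · simp
      rw [h1, h2, add_neg_cancel]
    rw [← hg] at hGker
    have : mulS k R s (fun l => G (Sum.inl l)) ∈
        Submodule.span (R ⊗[k] Rᵐᵒᵖ)
          (Set.range fun m => mulS k R s fun l => g m (Sum.inl l)) := by
      -- use the linear map φ := mulS ∘ (precomposition with inl)
      let φ : ((Fin s ⊕ (Σ i : Fin r, Fin (t i))) → R ⊗[k] Rᵐᵒᵖ) →ₗ[R ⊗[k] Rᵐᵒᵖ]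
          (Fin s → R) :=
        (mulS k R s).comp (LinearMap.funLeft (R ⊗[k] Rᵐᵒᵖ) (R ⊗[k] Rᵐᵒᵖ) Sum.inl)
      have : φ G ∈ Submodule.map φ (Submodule.span (R ⊗[k] Rᵐᵒᵖ) (Set.range g)) :=
        Submodule.mem_map_of_mem hGker
      rw [Submodule.map_span, ← Set.range_comp] at this
      exact this
    have hGh : mulS k R s (fun l => G (Sum.inl l)) = h := by
      funext l
      rw [mulS_apply]
      simp only [hG, Sum.elim_inl]
      rw [TensorProduct.Algebra.smul_def]
      simp
    rwa [hGh] at this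
  · -- span ⊆ ⋂ Mᵢ
    rw [Submodule.span_le]
    rintro x ⟨m, rfl⟩
    simp only [SetLike.mem_coe, Submodule.mem_iInf]
    intro i
    have hgm : g m ∈ LinearMap.ker (interMap k t f) := by
      rw [← hg]; exact Submodule.subset_span ⟨m, rfl⟩
    rw [LinearMap.mem_ker] at hgm
    have h0 : interMap k t f (g m) i = 0 := by rw [hgm]; rfl
    rw [interMap_apply] at h0
    have key : mulS k R s (fun l => g m (Sum.inl l)) =
        -∑ jt : Σ i' : Fin r, Fin (t i'),
          g m (Sum.inr jt) • (if jt.1 = i then f jt.1 jt.2 else 0) := by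
      rw [mulS_eq_sum]
      exact eq_neg_of_add_eq_zero_left h0
    rw [key]
    refine neg_mem (Submodule.sum_mem _ fun jt _ => ?_)
    split_ifs with hji
    · subst hji
      exact Submodule.smul_mem _ _ (Submodule.subset_span ⟨jt.2, rfl⟩)
    · simp
end
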